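/- arXiv:2107.09696 — 2 statements merged into one kernel-verified Lean document; each statement's English description precedes it below -/
import Mathlib

section
/- Let 𝒮 be a 1-nested compatible set pair system on X and let (S,H) ∈ 𝒮 with H ≠ ∅. Then the set M = {(S',H') ∈ 𝒮 : (S,H) < (S',H') and H' ≠ H} has a unique ≤-minimal element (S₂,H₂). Moreover, S ∪ H ⊆ S₂, and every (S₁,H₁) ∈ 𝒮 with (S,H) < (S₁,H₁) < (S₂,H₂) satisfies S ⊊ S₁ and H₁ = H. -/
open Set

variable {X : Type*}

/-- A set pair on `X`: an ordered pair `(S,H)` of subsets of `X` with `S ≠ ∅` and `S ∩ H = ∅`. -/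
def IsSetPair (p : Set X × Set X) : Prop :=
  p.1 ≠ ∅ ∧ p.1 ∩ p.2 = ∅

/-- A set pair system on `X`: a collection of set pairs on `X`. -/
def IsSPS (𝒮 : Set (Set X × Set X)) : Prop :=
  ∀ p ∈ 𝒮, IsSetPair p

/-- The strict relation `<` on set pairs: `(S₁,H₁) < (S₂,H₂)` iff they are distinct and
(a) `S₁ ∪ H₁ ⊆ S₂`, or (b) `S₁ ∪ H₁ ⊆ H₂`, or (c) `S₁ ⊊ S₂` and `H₁ = H₂ ≠ ∅`. -/
def splt (p q : Set X × Set X) : Prop :=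
  p ≠ q ∧ (p.1 ∪ p.2 ⊆ q.1 ∨ p.1 ∪ p.2 ⊆ q.2 ∨ (p.1 ⊂ q.1 ∧ p.2 = q.2 ∧ q.2 ≠ ∅))

/-- `(S₁,H₁) ≤ (S₂,H₂)` iff `(S₁,H₁) < (S₂,H₂)` or `(S₁,H₁) = (S₂,H₂)`. -/
def sple (p q : Set X × Set X) : Prop :=
  splt p q ∨ p = q

/-- Exactly one of four propositions holds. -/
def ExactlyOne4 (a b c d : Prop) : Prop :=
  (a ∧ ¬b ∧ ¬c ∧ ¬d) ∨ (¬a ∧ b ∧ ¬c ∧ ¬d) ∨ (¬a ∧ ¬b ∧ c ∧ ¬d) ∨ (¬a ∧ ¬b ∧ ¬c ∧ d)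

/-- Exactly one of three propositions holds. -/
def ExactlyOne3 (a b c : Prop) : Prop :=
  (a ∧ ¬b ∧ ¬c) ∨ (¬a ∧ b ∧ ¬c) ∨ (¬a ∧ ¬b ∧ c)

/-- A 1-nested compatible set pair system on `X`: a set pair system satisfying (NC1)–(NC5). -/
def OneNestedCompatible (𝒮 : Set (Set X × Set X)) : Prop :=
  IsSPS 𝒮 ∧
  -- (NC1)
  (((Set.univ : Set X), (∅ : Set X)) ∈ 𝒮) ∧
  -- (NC2)
  (∀ x : X, (({x} : Set X), (∅ : Set X)) ∈ 𝒮) ∧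
  -- (NC3)
  (∀ p ∈ 𝒮, p.2 ≠ ∅ → ((p.2, (∅ : Set X)) : Set X × Set X) ∈ 𝒮) ∧
  -- (NC4)
  (∀ p ∈ 𝒮, ∀ q ∈ 𝒮, p ≠ q →
    ExactlyOne4 (splt p q) (splt q p)
      ((p.1 ∪ p.2) ∩ (q.1 ∪ q.2) = ∅)
      (p.1 ∩ q.1 = ∅ ∧ p.2 = q.2 ∧ p.2 ≠ ∅)) ∧
  -- (NC5)
  (¬ ∃ p ∈ 𝒮, ∃ q ∈ 𝒮, ∃ r ∈ 𝒮,
    p.2 = q.2 ∧ q.2 = r.2 ∧ p.2 ≠ ∅ ∧ p.1 ∩ q.1 = ∅ ∧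
    (p.1 ∪ q.1 ⊆ r.1 ∨ (p.1 ∪ q.1) ∩ r.1 = ∅))

/-- `p` covers `q` in the partial order `(𝒮,≤)`: an arc from `p` to `q`
in the Hasse diagram `D(𝒮)`; `p` is a parent of `q`, and `q` is a child of `p`. -/
def SPCovers (𝒮 : Set (Set X × Set X)) (p q : Set X × Set X) : Prop :=
  p ∈ 𝒮 ∧ q ∈ 𝒮 ∧ splt q p ∧ ¬ ∃ r ∈ 𝒮, splt q r ∧ splt r p

/-- `L` is the directed path `P(S,H)` in `D(𝒮)` associated with `(S,H) ∈ 𝒮`, `H ≠ ∅`: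
a sequence `(q₀,…,q_m)` of elements of `𝒮` with `m ≥ 2` in which `q_j` covers `q_{j+1}`,
such that `q_m = (H,∅)`, every interior `q_j` (`1 ≤ j ≤ m-1`) has second component `H`,
`q_i = (S,H)` for some `1 ≤ i ≤ m-1`, and the first element `q₀ = (S₊,H₊)` satisfies
`S ∪ H ⊆ S₊` and `H₊ ≠ H`. -/
def IsSPPath (𝒮 : Set (Set X × Set X)) (S H : Set X) (L : List (Set X × Set X)) : Prop :=
  3 ≤ L.length ∧
  List.Chain' (fun a b => SPCovers 𝒮 a b) L ∧
  L.getLast? = some ((H, (∅ : Set X)) : Set X × Set X) ∧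
  (∀ i : ℕ, ∀ p : Set X × Set X, 1 ≤ i → i + 1 < L.length → L[i]? = some p → p.2 = H) ∧
  (∃ i : ℕ, 1 ≤ i ∧ i + 1 < L.length ∧ L[i]? = some ((S, H) : Set X × Set X)) ∧
  (∃ p : Set X × Set X, L.head? = some p ∧ S ∪ H ⊆ p.1 ∧ p.2 ≠ H)

/-- A directed path in the Hasse diagram `D(𝒮)`: a sequence of at least two elements of `𝒮`
in which each element covers the next. -/
def IsDirPath (𝒮 : Set (Set X × Set X)) (L : List (Set X × Set X)) : Prop :=
  2 ≤ L.length ∧ List.Chain' (fun a b => SPCovers 𝒮 a b) L ∧ ∀ p ∈ L, p ∈ 𝒮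


/-!
Every set pair `(S,H)` with `H ≠ ∅` lies below `(X,∅)`, so by finiteness the set `M` of pairs above
`(S,H)` with a different second component has a minimal element. No minimal element, nor anything
below it, can contain `S ∪ H` in its second component `H'`: otherwise `(H',∅)` (present by (NC3))
would be a smaller element of `M`. Hence a minimal element contains `S ∪ H` in its first component,
and two such minimal elements, sharing the nonempty `S`, must be comparable by (NC4), so they
coincide. The same dichotomy shows that anything strictly between `(S,H)` and the minimal element
keeps the second component `H`.
-/

section Order

variable {p q r : Set X × Set X}

lemma splt_asymm (hp : IsSetPair p) (hq : IsSetPair q) (hpq : splt p q) : ¬ splt q p := by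
  obtain ⟨hp1, hpd⟩ := hp
  obtain ⟨hq1, hqd⟩ := hq
  rintro ⟨hqp, hqp'⟩
  have empty_of_subset {A B : Set X} (hAB : A ⊆ B) (hd : A ∩ B = ∅) : A = ∅ := by
    rwa [inter_eq_self_of_subset_left hAB] at hd
  rcases hpq with ⟨hpq, ha | hb | hc⟩ <;> rcases hqp' with ha' | hb' | hc'
  · have h1 : p.1 = q.1 := (subset_union_left.trans ha).antisymm (subset_union_left.trans ha')
    have hp2 : p.2 = ∅ := empty_of_subset (h1 ▸ subset_union_right.trans ha) (by rwa [inter_comm])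
    have hq2 : q.2 = ∅ := empty_of_subset (h1 ▸ subset_union_right.trans ha') (by rwa [inter_comm])
    exact hpq (Prod.ext h1 (hp2.trans hq2.symm))
  · exact hp1 (empty_of_subset (fun x hx => hb' (Or.inl (ha (Or.inl hx)))) hpd)
  · exact hc'.1.not_subset (subset_union_left.trans ha)
  · exact hq1 (empty_of_subset (fun x hx => hb (Or.inl (ha' (Or.inl hx)))) hqd)
  · exact hp1 (empty_of_subset (fun x hx => hb' (Or.inr (hb (Or.inl hx)))) hpd)
  · exact hp1 (empty_of_subset (hc'.2.1 ▸ subset_union_left.trans hb) hpd)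
  · exact hc.1.not_subset (subset_union_left.trans ha')
  · exact hq1 (empty_of_subset (hc.2.1.symm ▸ subset_union_left.trans hb') hqd)
  · exact hc.1.not_subset hc'.1.subset

lemma splt_trans (hp : IsSetPair p) (hq : IsSetPair q) (hpq : splt p q) (hqr : splt q r) :
    splt p r := by
  refine ⟨by rintro rfl; exact splt_asymm hp hq hpq hqr, ?_⟩
  rcases hpq.2 with ha | hb | hc <;> rcases hqr.2 with ha' | hb' | hc'
  · exact Or.inl (ha.trans (subset_union_left.trans ha'))
  · exact Or.inr (Or.inl (ha.trans (subset_union_left.trans hb')))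
  · exact Or.inl (ha.trans hc'.1.subset)
  · exact Or.inl (hb.trans (subset_union_right.trans ha'))
  · exact Or.inr (Or.inl (hb.trans (subset_union_right.trans hb')))
  · exact Or.inr (Or.inl (hc'.2.1 ▸ hb))
  · exact Or.inl ((union_subset_union hc.1.subset hc.2.1.subset).trans ha')
  · exact Or.inr (Or.inl ((union_subset_union hc.1.subset hc.2.1.subset).trans hb'))
  · exact Or.inr (Or.inr ⟨hc.1.trans hc'.1, hc.2.1.trans hc'.2.1, hc'.2.2⟩)

lemma splt_snd_self (hq : q.2 ≠ ∅) : splt (q.2, ∅) q :=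
  ⟨fun e => hq (congrArg Prod.snd e).symm, Or.inr (Or.inl (by simp))⟩

end Order

lemma IsSPS.exists_splt_minimal [Finite X] {M : Set (Set X × Set X)} (hM : IsSPS M)
    (hne : M.Nonempty) : ∃ q ∈ M, ∀ r ∈ M, ¬ splt r q := by
  let lt (p q : Set X × Set X) : Prop := IsSetPair p ∧ IsSetPair q ∧ splt p q
  have : IsTrans _ lt :=
    ⟨fun _ _ _ ⟨hp, hq, hpq⟩ ⟨_, hr, hqr⟩ => ⟨hp, hr, splt_trans hp hq hpq hqr⟩⟩
  have : Std.Irrefl lt := ⟨fun _ h => h.2.2.1 rfl⟩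
  obtain ⟨q, hq, hmin⟩ := (Finite.wellFounded_of_trans_of_irrefl lt).has_min M hne
  exact ⟨q, hq, fun r hr hrq => hmin r hr ⟨hM r hr, hM q hq, hrq⟩⟩

-- The set `M` of the statement, for `p = (S,H)`.
def upperDiffSnd (𝒮 : Set (Set X × Set X)) (p : Set X × Set X) : Set (Set X × Set X) :=
  {r ∈ 𝒮 | splt p r ∧ r.2 ≠ p.2}

namespace OneNestedCompatible

variable {𝒮 : Set (Set X × Set X)} {p q r : Set X × Set X}

lemma isSPS_upperDiffSnd (h : OneNestedCompatible 𝒮) : IsSPS (upperDiffSnd 𝒮 p) :=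
  fun r hr => h.1 r hr.1

lemma univ_mem_upperDiffSnd (h : OneNestedCompatible 𝒮) (hp2 : p.2 ≠ ∅) :
    (univ, ∅) ∈ upperDiffSnd 𝒮 p :=
  ⟨h.2.1, ⟨fun e => hp2 (congrArg Prod.snd e), Or.inl (subset_univ _)⟩, fun e => hp2 e.symm⟩

lemma snd_mem_upperDiffSnd (h : OneNestedCompatible 𝒮) (hp2 : p.2 ≠ ∅) (hr : r ∈ 𝒮)
    (hr2 : r.2 ≠ ∅) (hsub : p.1 ∪ p.2 ⊆ r.2) : (r.2, ∅) ∈ upperDiffSnd 𝒮 p :=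
  ⟨h.2.2.2.1 r hr hr2, ⟨fun e => hp2 (congrArg Prod.snd e), Or.inl hsub⟩, fun e => hp2 e.symm⟩

lemma not_subset_snd_of_minimal (h : OneNestedCompatible 𝒮) (hp2 : p.2 ≠ ∅)
    (hmin : ∀ s ∈ upperDiffSnd 𝒮 p, ¬ splt s q) (hr : r ∈ 𝒮) (hrq : sple r q) :
    ¬ p.1 ∪ p.2 ⊆ r.2 := by
  intro hsub
  have hr2 : r.2 ≠ ∅ := fun e => hp2 (subset_empty_iff.1 (e ▸ subset_union_right.trans hsub))
  have hmem := h.snd_mem_upperDiffSnd hp2 hr hr2 hsub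
  have hlt : splt (r.2, ∅) r := splt_snd_self hr2
  rcases hrq with hrq | rfl
  · exact hmin _ hmem (splt_trans (h.1 _ hmem.1) (h.1 r hr) hlt hrq)
  · exact hmin _ hmem hlt

lemma subset_fst_of_minimal (h : OneNestedCompatible 𝒮) (hp2 : p.2 ≠ ∅)
    (hq : q ∈ upperDiffSnd 𝒮 p) (hmin : ∀ s ∈ upperDiffSnd 𝒮 p, ¬ splt s q) :
    p.1 ∪ p.2 ⊆ q.1 := by
  rcases hq.2.1.2 with ha | hb | hc
  · exact ha
  · exact absurd hb (h.not_subset_snd_of_minimal hp2 hmin hq.1 (Or.inr rfl))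
  · exact absurd hc.2.1.symm hq.2.2

lemma eq_of_minimal (h : OneNestedCompatible 𝒮) (hp : p ∈ 𝒮) (hp2 : p.2 ≠ ∅)
    (hq : q ∈ upperDiffSnd 𝒮 p) (hqmin : ∀ s ∈ upperDiffSnd 𝒮 p, ¬ splt s q)
    (hr : r ∈ upperDiffSnd 𝒮 p) (hrmin : ∀ s ∈ upperDiffSnd 𝒮 p, ¬ splt s r) : q = r := by
  obtain ⟨x, hx⟩ := nonempty_iff_ne_empty.2 (h.1 p hp).1
  have hxq := h.subset_fst_of_minimal hp2 hq hqmin (Or.inl hx)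
  have hxr := h.subset_fst_of_minimal hp2 hr hrmin (Or.inl hx)
  by_contra hne
  rcases h.2.2.2.2.1 q hq.1 r hr.1 hne with
    ⟨hlt, -⟩ | ⟨-, hgt, -⟩ | ⟨-, -, hdisj, -⟩ | ⟨-, -, -, hdisj⟩
  · exact hrmin q hq hlt
  · exact hqmin r hr hgt
  · exact hdisj.subset ⟨Or.inl hxq, Or.inl hxr⟩
  · exact hdisj.1.subset ⟨hxq, hxr⟩

lemma fst_ssubset_and_snd_eq_of_lt_minimal (h : OneNestedCompatible 𝒮) (hp2 : p.2 ≠ ∅)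
    (hqmin : ∀ s ∈ upperDiffSnd 𝒮 p, ¬ splt s q) (hr : r ∈ 𝒮) (hpr : splt p r)
    (hrq : splt r q) : p.1 ⊂ r.1 ∧ r.2 = p.2 := by
  rcases hpr.2 with ha | hb | hc
  · by_cases hr2 : r.2 = p.2
    · obtain ⟨y, hy⟩ := nonempty_iff_ne_empty.2 hp2
      exact absurd ((h.1 r hr).2.subset ⟨ha (Or.inr hy), hr2 ▸ hy⟩) (notMem_empty y)
    · exact absurd hrq (hqmin r ⟨hr, hpr, hr2⟩)
  · exact absurd hb (h.not_subset_snd_of_minimal hp2 hqmin hr (Or.inl hrq))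
  · exact ⟨hc.1, hc.2.1.symm⟩

end OneNestedCompatible

theorem unique_minimal_above_general {X : Type*} [Fintype X]
    (𝒮 : Set (Set X × Set X)) (h : OneNestedCompatible 𝒮)
    (S H : Set X) (hmem : ((S, H) : Set X × Set X) ∈ 𝒮) (hH : H ≠ ∅) :
    ∃ q ∈ 𝒮, (splt ((S, H) : Set X × Set X) q ∧ q.2 ≠ H) ∧
      (∀ r ∈ 𝒮, splt ((S, H) : Set X × Set X) r ∧ r.2 ≠ H → sple r q → r = q) ∧
      (∀ q' ∈ 𝒮, (splt ((S, H) : Set X × Set X) q' ∧ q'.2 ≠ H) →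
        (∀ r ∈ 𝒮, splt ((S, H) : Set X × Set X) r ∧ r.2 ≠ H → sple r q' → r = q') →
        q' = q) ∧
      S ∪ H ⊆ q.1 ∧
      (∀ p ∈ 𝒮, splt ((S, H) : Set X × Set X) p → splt p q → S ⊂ p.1 ∧ p.2 = H) := by
  obtain ⟨q, hq, hqmin⟩ := (h.isSPS_upperDiffSnd (p := (S, H))).exists_splt_minimal
    ⟨_, h.univ_mem_upperDiffSnd hH⟩
  refine ⟨q, hq.1, hq.2, ?_, ?_, h.subset_fst_of_minimal hH hq hqmin,
    fun p hp hSp hpq => h.fst_ssubset_and_snd_eq_of_lt_minimal hH hqmin hp hSp hpq⟩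
  · rintro r hr hrM (hrq | rfl)
    · exact absurd hrq (hqmin r ⟨hr, hrM⟩)
    · rfl
  · intro q' hq' hq'M hq'min
    exact (h.eq_of_minimal hmem hH hq hqmin ⟨hq', hq'M⟩
      fun s hs hsq' => hsq'.1 (hq'min s hs.1 hs.2 (Or.inl hsq'))).symm

/-- If `𝒮` is 1-nested compatible and `(S,H) ∈ 𝒮` with `H ≠ ∅`, then the set
`M = {(S',H') ∈ 𝒮 : (S,H) < (S',H') and H' ≠ H}` has a unique `≤`-minimal element `(S₂,H₂)`;
moreover `S ∪ H ⊆ S₂` and every `(S₁,H₁) ∈ 𝒮` with `(S,H) < (S₁,H₁) < (S₂,H₂)` satisfies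
`S ⊊ S₁` and `H₁ = H`. -/
theorem unique_minimal_above {X : Type*} [Fintype X] [Nonempty X]
    (𝒮 : Set (Set X × Set X)) (h : OneNestedCompatible 𝒮)
    (S H : Set X) (hmem : ((S, H) : Set X × Set X) ∈ 𝒮) (hH : H ≠ ∅) :
    ∃ q ∈ 𝒮, (splt ((S, H) : Set X × Set X) q ∧ q.2 ≠ H) ∧
      (∀ r ∈ 𝒮, splt ((S, H) : Set X × Set X) r ∧ r.2 ≠ H → sple r q → r = q) ∧
      (∀ q' ∈ 𝒮, (splt ((S, H) : Set X × Set X) q' ∧ q'.2 ≠ H) →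
        (∀ r ∈ 𝒮, splt ((S, H) : Set X × Set X) r ∧ r.2 ≠ H → sple r q' → r = q') →
        q' = q) ∧
      S ∪ H ⊆ q.1 ∧
      (∀ p ∈ 𝒮, splt ((S, H) : Set X × Set X) p → splt p q → S ⊂ p.1 ∧ p.2 = H) :=
  unique_minimal_above_general 𝒮 h S H hmem hH
end

section
/- Let 𝒮 be a 1-nested compatible set pair system on X and let (S,H), (S',H) ∈ 𝒮 with H ≠ ∅. Suppose the directed paths P(S,H) = ((S₊,H₊),(S_k,H),…,(S₁,H),(H,∅)) and P(S',H) = ((S'₊,H'₊),(S'_l,H),…,(S'₁,H),(H,∅)) do not coincide. Then S_i ∩ S'_j = ∅ for all 1 ≤ i ≤ k and 1 ≤ j ≤ l, and the first elements coincide: (S₊,H₊) = (S'₊,H'₊). -/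
open Set

variable {X : Type*}

/-!
In a 1-nested compatible system an element `q` with `q.2 ≠ ∅` has at most one parent in the Hasse
diagram: by (NC4) a parent of `q` lies below everything above `q`. If interior vertices of `P(S,H)`
and `P(S',H)` meet, they are nested, so the lowest interior vertices of both paths lie below a
common element with second component `H`; by (NC5) they cannot be disjoint, and by minimality
they cannot be nested, so both paths pass through the same cover of `(H, ∅)`. Uniqueness of
parents propagates this equality upwards, and since no head has second component `H`, the two
paths coincide. If the interiors are disjoint, (NC4) places the first interior vertex of each path
below the head of the other, and uniqueness of parents again identifies the heads.
-/

namespace List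

variable {α : Type*} {R : α → α → Prop}

theorem IsChain.exists_rel_of_mem_tail :
    ∀ {l : List α}, l.IsChain R → ∀ {b : α}, b ∈ l.tail → ∃ a, R a b
  | a :: c :: l, hl, b, hb => by
    rcases mem_cons.1 hb with rfl | hb
    · exact ⟨a, hl.rel⟩
    · exact hl.tail.exists_rel_of_mem_tail hb

theorem IsChain.prefix_or_prefix_of_head?_eq {l₁ l₂ : List α} (h₁ : l₁.IsChain R)
    (h₂ : l₂.IsChain R) (hhead : l₁.head? = l₂.head?)
    (huniq : ∀ a ∈ l₁.dropLast, ∀ b c, R a b → R a c → b = c) : l₁ <+: l₂ ∨ l₂ <+: l₁ := by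
  induction l₁ generalizing l₂ with
  | nil => exact .inl nil_prefix
  | cons a t ih =>
    obtain _ | ⟨a', t₂⟩ := l₂
    · exact .inr nil_prefix
    obtain rfl : a = a' := by simpa using hhead
    obtain _ | ⟨b, t⟩ := t
    · exact .inl ((prefix_cons_inj a).2 nil_prefix)
    obtain _ | ⟨c, t₂⟩ := t₂
    · exact .inr ((prefix_cons_inj a).2 nil_prefix)
    obtain rfl : b = c := huniq a (by simp) b c h₁.rel h₂.rel
    simpa only [prefix_cons_inj] using ih (l₂ := b :: t₂) h₁.tail h₂.tail rfl
      (fun x hx => huniq x (by simp_all))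

theorem IsChain.suffix_or_suffix_of_getLast?_eq {l₁ l₂ : List α} (h₁ : l₁.IsChain R)
    (h₂ : l₂.IsChain R) (hlast : l₁.getLast? = l₂.getLast?)
    (huniq : ∀ b ∈ l₁.tail, ∀ a c, R a b → R c b → a = c) : l₁ <:+ l₂ ∨ l₂ <:+ l₁ := by
  simpa only [reverse_prefix] using
    IsChain.prefix_or_prefix_of_head?_eq (R := fun a b => R b a) (isChain_reverse.2 h₁)
      (isChain_reverse.2 h₂) (by simpa only [head?_reverse] using hlast)
      (fun b hb => huniq b (by simpa only [dropLast_reverse, mem_reverse] using hb))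

theorem eq_of_cons_suffix_cons {a b : α} {l m : List α} (h : a :: l <:+ b :: m) (ha : a ∉ m) :
    a :: l = b :: m := by
  obtain ⟨_ | ⟨c, t⟩, ht⟩ := h
  · exact ht
  · obtain ⟨-, rfl⟩ := cons_eq_cons.1 ht
    exact absurd (mem_append_right t mem_cons_self) ha

theorem mem_iff_exists_getElem?_cons_append {a b p : α} {l : List α} :
    p ∈ l ↔ ∃ i, 1 ≤ i ∧ i + 1 < (a :: (l ++ [b])).length ∧ (a :: (l ++ [b]))[i]? = some p := by
  have hlen : (a :: (l ++ [b])).length = l.length + 2 := by simp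
  rw [hlen]
  constructor
  · intro hp
    obtain ⟨i, hi⟩ := mem_iff_getElem?.1 hp
    have hil : i < l.length := (getElem?_eq_some_iff.1 hi).1
    exact ⟨i + 1, by omega, by omega, by simp [getElem?_append_left hil, hi]⟩
  · rintro ⟨_ | i, hi1, hi2, hp⟩
    · omega
    · rw [getElem?_cons_succ, getElem?_append_left (by omega)] at hp
      exact mem_of_getElem? hp

end List

section SetPairs

variable {𝒮 : Set (Set X × Set X)} {H : Set X} {p q q' r r' : Set X × Set X}

theorem splt.union_subset (hpq : splt p q) : p.1 ∪ p.2 ⊆ q.1 ∪ q.2 := by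
  rcases hpq.2 with h | h | ⟨h, h', -⟩
  · exact h.trans subset_union_left
  · exact h.trans subset_union_right
  · exact union_subset_union h.subset h'.le

theorem splt_of_fst_ssubset (hpq : p.1 ⊂ q.1) (h2 : p.2 = q.2) (hq : q.2 ≠ ∅) : splt p q :=
  ⟨fun he => hpq.ne (congrArg Prod.fst he), .inr (.inr ⟨hpq, h2, hq⟩)⟩

namespace OneNestedCompatible

theorem fst_nonempty (h : OneNestedCompatible 𝒮) (hp : p ∈ 𝒮) : p.1.Nonempty :=
  nonempty_iff_ne_empty.2 (h.1 p hp).1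

theorem fst_inter_snd (h : OneNestedCompatible 𝒮) (hp : p ∈ 𝒮) : p.1 ∩ p.2 = ∅ :=
  (h.1 p hp).2

theorem snd_mem (h : OneNestedCompatible 𝒮) (hp : p ∈ 𝒮) (hp2 : p.2 ≠ ∅) : (p.2, ∅) ∈ 𝒮 :=
  h.2.2.2.1 p hp hp2

theorem splt_or_splt_or_disjoint (h : OneNestedCompatible 𝒮) (hp : p ∈ 𝒮) (hq : q ∈ 𝒮)
    (hpq : p ≠ q) :
    splt p q ∨ splt q p ∨ (p.1 ∪ p.2) ∩ (q.1 ∪ q.2) = ∅ ∨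
      (p.1 ∩ q.1 = ∅ ∧ p.2 = q.2 ∧ p.2 ≠ ∅) := by
  rcases h.2.2.2.2.1 p hp q hq hpq with ⟨h1, -⟩ | ⟨-, h2, -⟩ | ⟨-, -, h3, -⟩ | ⟨-, -, -, h4⟩
  exacts [.inl h1, .inr (.inl h2), .inr (.inr (.inl h3)), .inr (.inr (.inr h4))]

theorem not_union_subset_fst (h : OneNestedCompatible 𝒮) (hp : p ∈ 𝒮) (hq : q ∈ 𝒮) (hr : r ∈ 𝒮)
    (hp2 : p.2 = H) (hq2 : q.2 = H) (hr2 : r.2 = H) (hH : H ≠ ∅) (hpq : p.1 ∩ q.1 = ∅) :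
    ¬ p.1 ∪ q.1 ⊆ r.1 := fun hsub =>
  h.2.2.2.2.2 ⟨p, hp, q, hq, r, hr, hp2.trans hq2.symm, hq2.trans hr2.symm, hp2 ▸ hH, hpq,
    .inl hsub⟩

theorem fst_ssubset_of_splt (h : OneNestedCompatible 𝒮) (hp : p ∈ 𝒮) (hq : q ∈ 𝒮)
    (hpq : splt p q) (h2 : p.2 = q.2) (hq2 : q.2 ≠ ∅) : p.1 ⊂ q.1 := by
  rcases hpq.2 with ha | hb | hc
  · obtain ⟨x, hx⟩ := nonempty_iff_ne_empty.2 hq2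
    exact (eq_empty_iff_forall_notMem.1 (h.fst_inter_snd hq) x ⟨ha (.inr (h2 ▸ hx)), hx⟩).elim
  · obtain ⟨x, hx⟩ := h.fst_nonempty hp
    exact (eq_empty_iff_forall_notMem.1 (h.fst_inter_snd hp) x ⟨hx, h2 ▸ hb (.inl hx)⟩).elim
  · exact hc.1

theorem fst_inter_eq_empty_or_ssubset (h : OneNestedCompatible 𝒮) (hp : p ∈ 𝒮) (hq : q ∈ 𝒮)
    (h2 : p.2 = q.2) (hq2 : q.2 ≠ ∅) (hpq : p ≠ q) :
    p.1 ∩ q.1 = ∅ ∨ p.1 ⊂ q.1 ∨ q.1 ⊂ p.1 := by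
  rcases h.splt_or_splt_or_disjoint hp hq hpq with hlt | hgt | hdisj | ⟨hdisj, -⟩
  · exact .inr (.inl (h.fst_ssubset_of_splt hp hq hlt h2 hq2))
  · exact .inr (.inr (h.fst_ssubset_of_splt hq hp hgt h2.symm (h2 ▸ hq2)))
  · obtain ⟨x, hx⟩ := nonempty_iff_ne_empty.2 hq2
    exact (eq_empty_iff_forall_notMem.1 hdisj x ⟨.inr (h2 ▸ hx), .inr hx⟩).elim
  · exact .inl hdisj

theorem not_union_subset_snd_of_covers (h : OneNestedCompatible 𝒮) (hc : SPCovers 𝒮 r q)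
    (hq : q.2 ≠ ∅) : ¬ q.1 ∪ q.2 ⊆ r.2 := by
  intro hsub
  have hr : r.2 ≠ ∅ := fun hr => hq (subset_empty_iff.1 (hr ▸ subset_union_right.trans hsub))
  refine hc.2.2.2 ⟨(r.2, ∅), h.snd_mem hc.1 hr, ⟨fun he => hq (congrArg Prod.snd he), .inl hsub⟩,
    ⟨fun he => hr (congrArg Prod.snd he).symm, .inr (.inl (union_empty _).le)⟩⟩

theorem fst_subset_of_covers (h : OneNestedCompatible 𝒮) (hc : SPCovers 𝒮 r q)
    (hq : q.2 ≠ ∅) : q.1 ⊆ r.1 := by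
  rcases hc.2.2.1.2 with ha | hb | hc
  · exact subset_union_left.trans ha
  · exact absurd hb (h.not_union_subset_snd_of_covers hc hq)
  · exact hc.1.subset

theorem union_subset_fst_of_covers (h : OneNestedCompatible 𝒮) (hc : SPCovers 𝒮 r q)
    (hq : q.2 ≠ ∅) (hqr : q.2 ≠ r.2) : q.1 ∪ q.2 ⊆ r.1 := by
  rcases hc.2.2.1.2 with ha | hb | hc
  · exact ha
  · exact absurd hb (h.not_union_subset_snd_of_covers hc hq)
  · exact absurd hc.2.1 hqr

theorem sple_of_covers_of_splt (h : OneNestedCompatible 𝒮) (hc : SPCovers 𝒮 r q)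
    (hq : q.2 ≠ ∅) (hr' : r' ∈ 𝒮) (hqr' : splt q r') : sple r r' := by
  by_cases hrr' : r = r'
  · exact .inr hrr'
  obtain ⟨x, hx⟩ := h.fst_nonempty hc.2.1
  have hxr' : x ∈ r'.1 ∪ r'.2 := hqr'.union_subset (.inl hx)
  rcases h.splt_or_splt_or_disjoint hc.1 hr' hrr' with hlt | hgt | hdisj | ⟨hdisj, hsnd, -⟩
  · exact .inl hlt
  · exact absurd ⟨r', hr', hqr', hgt⟩ hc.2.2.2
  · exact (eq_empty_iff_forall_notMem.1 hdisj x ⟨hc.2.2.1.union_subset (.inl hx), hxr'⟩).elim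
  · have hxr : x ∈ r.1 := h.fst_subset_of_covers hc hq hx
    rcases hxr' with hx' | hx'
    · exact (eq_empty_iff_forall_notMem.1 hdisj x ⟨hxr, hx'⟩).elim
    · exact (eq_empty_iff_forall_notMem.1 (h.fst_inter_snd hc.1) x ⟨hxr, hsnd ▸ hx'⟩).elim

theorem eq_of_covers_of_covers (h : OneNestedCompatible 𝒮) (hc : SPCovers 𝒮 r q)
    (hc' : SPCovers 𝒮 r' q) (hq : q.2 ≠ ∅) : r = r' :=
  (h.sple_of_covers_of_splt hc hq hc'.1 hc'.2.2.1).elim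
    (fun hlt => absurd ⟨r, hc.1, hc.2.2.1, hlt⟩ hc'.2.2.2) id

theorem splt_of_snd_subset_fst (h : OneNestedCompatible 𝒮) (hp : p ∈ 𝒮) (hr : r ∈ 𝒮)
    (hp2 : p.2 ≠ ∅) (hpr : p.2 ≠ r.2) (hsub : p.2 ⊆ r.1) (hnot : ¬ r.1 ∪ r.2 ⊆ p.1 ∪ p.2) :
    splt p r := by
  obtain ⟨x, hx⟩ := nonempty_iff_ne_empty.2 hp2
  rcases h.splt_or_splt_or_disjoint hp hr (fun he => hpr (he ▸ rfl)) with
    hlt | hgt | hdisj | ⟨-, hsnd, -⟩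
  · exact hlt
  · exact absurd hgt.union_subset hnot
  · exact (eq_empty_iff_forall_notMem.1 hdisj x ⟨.inr hx, .inl (hsub hx)⟩).elim
  · exact absurd hsnd hpr

theorem splt_of_covers_of_fst_inter_eq_empty (h : OneNestedCompatible 𝒮) (hc : SPCovers 𝒮 r q)
    (hq' : q' ∈ 𝒮) (hq2 : q.2 ≠ ∅) (hsnd : q'.2 = q.2) (hr : r.2 ≠ q.2)
    (hdisj : q.1 ∩ q'.1 = ∅) : splt q' r := by
  have hsub := h.union_subset_fst_of_covers hc hq2 hr.symm
  refine h.splt_of_snd_subset_fst hq' hc.1 (hsnd ▸ hq2) (hsnd ▸ hr.symm)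
    (hsnd ▸ subset_union_right.trans hsub) fun hr' => ?_
  -- `q.1 ⊆ r.1` misses both `q'.1` and `q'.2 = q.2`
  obtain ⟨x, hx⟩ := h.fst_nonempty hc.2.1
  rcases hr' (.inl (hsub (.inl hx))) with hx' | hx'
  · exact (eq_empty_iff_forall_notMem.1 hdisj x ⟨hx, hx'⟩).elim
  · exact (eq_empty_iff_forall_notMem.1 (h.fst_inter_snd hc.2.1) x ⟨hx, hsnd ▸ hx'⟩).elim

theorem eq_of_covers_of_union_subset (h : OneNestedCompatible 𝒮) {b b' c : Set X × Set X}
    (hb : SPCovers 𝒮 b (H, ∅)) (hb' : SPCovers 𝒮 b' (H, ∅)) (hb2 : b.2 = H) (hb'2 : b'.2 = H)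
    (hH : H ≠ ∅) (hc : c ∈ 𝒮) (hc2 : c.2 = H) (hsub : b.1 ∪ b'.1 ⊆ c.1) : b = b' := by
  by_contra hne
  rcases h.fst_inter_eq_empty_or_ssubset hb.1 hb'.1 (hb2.trans hb'2.symm) (hb'2 ▸ hH) hne with
    hdisj | hlt | hgt
  · exact h.not_union_subset_fst hb.1 hb'.1 hc hb2 hb'2 hc2 hH hdisj hsub
  · exact hb'.2.2.2 ⟨b, hb.1, hb.2.2.1,
      splt_of_fst_ssubset hlt (hb2.trans hb'2.symm) (hb'2 ▸ hH)⟩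
  · exact hb.2.2.2 ⟨b', hb'.1, hb'.2.2.1,
      splt_of_fst_ssubset hgt (hb'2.trans hb2.symm) (hb2 ▸ hH)⟩

end OneNestedCompatible

end SetPairs

/-- `P(S,H)` written as `q₀ :: M ++ [(H, ∅)]` with interior `M`, forgetting `(S,H)`. -/
structure IsPathTo (𝒮 : Set (Set X × Set X)) (H : Set X) (q₀ : Set X × Set X)
    (M : List (Set X × Set X)) : Prop where
  isChain : (q₀ :: (M ++ [(H, ∅)])).IsChain (SPCovers 𝒮)
  ne_nil : M ≠ []
  snd_eq : ∀ p ∈ M, p.2 = H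
  head_snd_ne : q₀.2 ≠ H

theorem IsSPPath.exists_eq_cons_append {𝒮 : Set (Set X × Set X)} {S H : Set X}
    {L : List (Set X × Set X)} (hL : IsSPPath 𝒮 S H L) :
    ∃ q₀ M, L = q₀ :: (M ++ [(H, ∅)]) ∧ IsPathTo 𝒮 H q₀ M := by
  obtain ⟨hlen, hchain, hlast, hsnd, -, q₀', hhead, -, hq₀⟩ := hL
  obtain _ | ⟨q₀, T⟩ := L
  · simp at hlen
  obtain rfl : q₀ = q₀' := by simpa using hhead
  obtain rfl | ⟨M, z, rfl⟩ := T.eq_nil_or_concat'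
  · simp at hlen
  obtain rfl : z = (H, ∅) := by simpa [List.getLast?_cons] using hlast
  refine ⟨q₀, M, rfl, hchain, fun hM => by simp [hM] at hlen, fun p hp => ?_, hq₀⟩
  obtain ⟨i, hi1, hi2, hi⟩ := List.mem_iff_exists_getElem?_cons_append.1 hp
  exact hsnd i p hi1 hi2 hi

namespace IsPathTo

variable {𝒮 : Set (Set X × Set X)} {H : Set X} {q₀ q₀' : Set X × Set X}
  {M M' : List (Set X × Set X)}

theorem mem (hP : IsPathTo 𝒮 H q₀ M) {p : Set X × Set X} (hp : p ∈ M) : p ∈ 𝒮 := by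
  obtain ⟨a, ha⟩ := hP.isChain.exists_rel_of_mem_tail (List.mem_append_left _ hp)
  exact ha.2.1

theorem covers_head (hP : IsPathTo 𝒮 H q₀ M) : SPCovers 𝒮 q₀ (M.head hP.ne_nil) := by
  obtain ⟨m, M, rfl⟩ := List.exists_cons_of_ne_nil hP.ne_nil
  exact hP.isChain.rel

theorem covers_getLast (hP : IsPathTo 𝒮 H q₀ M) : SPCovers 𝒮 (M.getLast hP.ne_nil) (H, ∅) :=
  hP.isChain.tail.rel_getLast_head_of_append hP.ne_nil (List.cons_ne_nil _ _)

theorem getLast_fst_subset (h : OneNestedCompatible 𝒮) (hP : IsPathTo 𝒮 H q₀ M) (hH : H ≠ ∅)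
    {p : Set X × Set X} (hp : p ∈ M) : (M.getLast hP.ne_nil).1 ⊆ p.1 := by
  have hchain : (M.map Prod.fst).IsChain (· ⊇ ·) :=
    List.isChain_map _ |>.2 <| hP.isChain.tail.left_of_append.imp_of_mem_imp
      fun a b _ hb hab => h.fst_subset_of_covers hab (hP.snd_eq b hb ▸ hH)
  simpa [List.getLast_map] using
    (List.isChain_iff_pairwise.1 hchain).rel_getLast (List.mem_map_of_mem hp)

theorem getLast_eq_of_fst_inter_nonempty (h : OneNestedCompatible 𝒮) (hH : H ≠ ∅)
    (hP : IsPathTo 𝒮 H q₀ M) (hP' : IsPathTo 𝒮 H q₀' M') {p p' : Set X × Set X} (hp : p ∈ M)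
    (hp' : p' ∈ M') (hpp' : (p.1 ∩ p'.1).Nonempty) :
    M.getLast hP.ne_nil = M'.getLast hP'.ne_nil := by
  obtain ⟨c, hc, hc2, hpc, hp'c⟩ : ∃ c ∈ 𝒮, c.2 = H ∧ p.1 ⊆ c.1 ∧ p'.1 ⊆ c.1 := by
    by_cases hne : p = p'
    · exact ⟨p', hP'.mem hp', hP'.snd_eq p' hp', hne ▸ subset_rfl, subset_rfl⟩
    rcases h.fst_inter_eq_empty_or_ssubset (hP.mem hp) (hP'.mem hp')
        ((hP.snd_eq p hp).trans (hP'.snd_eq p' hp').symm) (hP'.snd_eq p' hp' ▸ hH) hne with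
      hdisj | hlt | hgt
    · exact absurd hdisj hpp'.ne_empty
    · exact ⟨p', hP'.mem hp', hP'.snd_eq p' hp', hlt.subset, subset_rfl⟩
    · exact ⟨p, hP.mem hp, hP.snd_eq p hp, subset_rfl, hgt.subset⟩
  exact h.eq_of_covers_of_union_subset hP.covers_getLast hP'.covers_getLast
    (hP.snd_eq _ (M.getLast_mem _)) (hP'.snd_eq _ (M'.getLast_mem _)) hH hc hc2
    (union_subset ((hP.getLast_fst_subset h hH hp).trans hpc)
      ((hP'.getLast_fst_subset h hH hp').trans hp'c))

theorem eq_of_getLast_eq (h : OneNestedCompatible 𝒮) (hH : H ≠ ∅) (hP : IsPathTo 𝒮 H q₀ M)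
    (hP' : IsPathTo 𝒮 H q₀' M') (hlast : M.getLast hP.ne_nil = M'.getLast hP'.ne_nil) :
    q₀ :: M = q₀' :: M' := by
  have hchain : (q₀ :: M).IsChain (SPCovers 𝒮) := hP.isChain.left_of_append (l₂ := [(H, ∅)])
  have hchain' : (q₀' :: M').IsChain (SPCovers 𝒮) := hP'.isChain.left_of_append (l₂ := [(H, ∅)])
  rcases hchain.suffix_or_suffix_of_getLast?_eq hchain'
      (by simp [List.getLast?_cons, List.getLast?_eq_some_getLast hP.ne_nil,
        List.getLast?_eq_some_getLast hP'.ne_nil, hlast])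
      (fun b hb a c hab hcb => h.eq_of_covers_of_covers hab hcb (hP.snd_eq b hb ▸ hH)) with
    hsuf | hsuf
  · exact List.eq_of_cons_suffix_cons hsuf fun hq => hP.head_snd_ne (hP'.snd_eq q₀ hq)
  · exact (List.eq_of_cons_suffix_cons hsuf fun hq => hP'.head_snd_ne (hP.snd_eq q₀' hq)).symm

theorem head_eq_of_fst_inter_eq_empty (h : OneNestedCompatible 𝒮) (hH : H ≠ ∅)
    (hP : IsPathTo 𝒮 H q₀ M) (hP' : IsPathTo 𝒮 H q₀' M')
    (hdisj : (M.head hP.ne_nil).1 ∩ (M'.head hP'.ne_nil).1 = ∅) : q₀ = q₀' := by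
  have hq2 := hP.snd_eq _ (M.head_mem hP.ne_nil)
  have hq'2 := hP'.snd_eq _ (M'.head_mem hP'.ne_nil)
  have hsnd : (M'.head hP'.ne_nil).2 = (M.head hP.ne_nil).2 := hq'2.trans hq2.symm
  have hlt := h.splt_of_covers_of_fst_inter_eq_empty hP.covers_head (hP'.mem (M'.head_mem _))
    (by rwa [hq2]) hsnd (by rw [hq2]; exact hP.head_snd_ne) hdisj
  have hgt := h.splt_of_covers_of_fst_inter_eq_empty hP'.covers_head (hP.mem (M.head_mem _))
    (by rwa [hq'2]) hsnd.symm (by rw [hq'2]; exact hP'.head_snd_ne) (inter_comm _ _ ▸ hdisj)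
  rcases h.sple_of_covers_of_splt hP'.covers_head (by rwa [hq'2]) hP.covers_head.1 hlt with
    hlt' | heq
  · exact absurd ⟨q₀', hP'.covers_head.1, hgt, hlt'⟩ hP.covers_head.2.2.2
  · exact heq.symm

end IsPathTo

theorem distinct_paths_disjoint_interiors_general {X : Type*}
    (𝒮 : Set (Set X × Set X)) (h : OneNestedCompatible 𝒮)
    (S S' H : Set X) (hH : H ≠ ∅)
    (L L' : List (Set X × Set X))
    (hL : IsSPPath 𝒮 S H L) (hL' : IsSPPath 𝒮 S' H L') (hne : L ≠ L') :
    (∀ i j : ℕ, ∀ p p' : Set X × Set X,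
      1 ≤ i → i + 1 < L.length → 1 ≤ j → j + 1 < L'.length →
      L[i]? = some p → L'[j]? = some p' → p.1 ∩ p'.1 = ∅) ∧
    L.head? = L'.head? := by
  obtain ⟨q₀, M, rfl, hP⟩ := hL.exists_eq_cons_append
  obtain ⟨q₀', M', rfl, hP'⟩ := hL'.exists_eq_cons_append
  have hdisj : ∀ p ∈ M, ∀ p' ∈ M', p.1 ∩ p'.1 = ∅ := by
    refine fun p hp p' hp' => not_nonempty_iff_eq_empty.1 fun hpp' => hne ?_
    have hlast := hP.getLast_eq_of_fst_inter_nonempty h hH hP' hp hp' hpp'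
    obtain ⟨rfl, rfl⟩ := List.cons_eq_cons.1 (hP.eq_of_getLast_eq h hH hP' hlast)
    rfl
  refine ⟨fun i j p p' hi1 hi2 hj1 hj2 hp hp' =>
    hdisj p (List.mem_iff_exists_getElem?_cons_append.2 ⟨i, hi1, hi2, hp⟩)
      p' (List.mem_iff_exists_getElem?_cons_append.2 ⟨j, hj1, hj2, hp'⟩), ?_⟩
  simp [hP.head_eq_of_fst_inter_eq_empty h hH hP' (hdisj _ (M.head_mem _) _ (M'.head_mem _))]

/-- If `𝒮` is 1-nested compatible, `(S,H), (S',H) ∈ 𝒮` with `H ≠ ∅`, and the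
directed paths `P(S,H)` and `P(S',H)` do not coincide, then the first components of their
interior elements are pairwise disjoint and the two paths have the same first element. -/
theorem distinct_paths_disjoint_interiors {X : Type*} [Fintype X] [Nonempty X]
    (𝒮 : Set (Set X × Set X)) (h : OneNestedCompatible 𝒮)
    (S S' H : Set X) (hH : H ≠ ∅)
    (hmem : ((S, H) : Set X × Set X) ∈ 𝒮) (hmem' : ((S', H) : Set X × Set X) ∈ 𝒮)
    (L L' : List (Set X × Set X))
    (hL : IsSPPath 𝒮 S H L) (hL' : IsSPPath 𝒮 S' H L') (hne : L ≠ L') :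
    (∀ i j : ℕ, ∀ p p' : Set X × Set X,
      1 ≤ i → i + 1 < L.length → 1 ≤ j → j + 1 < L'.length →
      L[i]? = some p → L'[j]? = some p' → p.1 ∩ p'.1 = ∅) ∧
    L.head? = L'.head? :=
  distinct_paths_disjoint_interiors_general 𝒮 h S S' H hH L L' hL hL' hne
end
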